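/- For any merge plan M on R, any terminal set Y ⊆ R used for contraction, and any nonempty X ⊆ R, one has value(M/Y, X) ≤ value(M, X), where M/Y is the merge plan on R/Y whose partition at each time t arises from that of M by combining all parts intersecting Y. Consequently, for a graph G and terminal sets X, Y ⊆ R, drop_{G/Y}(X) ≤ drop_G(X). -/

import Mathlib

/-- A merge plan on a terminal set `R`: a family of partitions of `R`
(given as setoids, one for each time `t : ℝ`) such that two distinct
terminals `x, y` lie in different parts of the partition at time `t`
if and only if `0 ≤ t ≤ mergeTime x y`. -/
structure MergePlan (R : Type*) where
  rel : ℝ → Setoid R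
  mergeTime : R → R → ℝ
  mergeTime_self : ∀ x : R, mergeTime x x = 0
  mergeTime_nonneg : ∀ x y : R, x ≠ y → 0 ≤ mergeTime x y
  rel_iff : ∀ (t : ℝ) (x y : R), x ≠ y →
    (¬ (rel t).r x y ↔ 0 ≤ t ∧ t ≤ mergeTime x y)

/-- The local value of a merge plan for a terminal set `X`:
`∫_0^∞ (|{parts meeting X}| - 1) dt`. -/
noncomputable def MergePlan.localValue {R : Type*} (M : MergePlan R) (X : Set R) : ℝ :=
  ∫ t in Set.Ioi (0 : ℝ),
    ((Set.ncard (Quotient.mk (M.rel t) '' X) : ℝ) - 1)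

/-- The value of a merge plan: `∫_0^∞ (|S^t| - 1) dt`. -/
noncomputable def MergePlan.value {R : Type*} (M : MergePlan R) : ℝ :=
  M.localValue Set.univ
/-- The minimum cost of a spanning tree of the complete graph on `R`
with respect to the edge costs `u`. -/
noncomputable def mstCost {R : Type*} (u : Sym2 R → ℝ) : ℝ :=
  sInf {w : ℝ | ∃ T : Finset (Sym2 R), (∀ e ∈ T, ¬ e.IsDiag) ∧
    (SimpleGraph.fromEdgeSet (↑T : Set (Sym2 R))).Connected ∧
    T.card + 1 = Nat.card R ∧ w = ∑ e ∈ T, u e}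
/-- The setoid on `R` identifying all elements of `X` (and nothing else). -/
def contractSetoid {R : Type*} (X : Set R) : Setoid R where
  r a b := a = b ∨ (a ∈ X ∧ b ∈ X)
  iseqv := ⟨fun _ => Or.inl rfl,
    fun h => h.elim (fun e => Or.inl e.symm) (fun h' => Or.inr ⟨h'.2, h'.1⟩),
    fun h1 h2 => by
      rcases h1 with rfl | ⟨ha, hb⟩
      · exact h2
      · rcases h2 with rfl | ⟨_, hc⟩
        · exact Or.inr ⟨ha, hb⟩
        · exact Or.inr ⟨ha, hc⟩⟩

/-- Edge costs on the quotient of `R` by a setoid `sd`: the minimum of `d`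
over all pairs of representatives. -/
noncomputable def quotCost {R : Type*} (d : Sym2 R → ℝ) (sd : Setoid R) :
    Sym2 (Quotient sd) → ℝ :=
  fun e => sInf {v : ℝ | ∃ a b : R,
    s(Quotient.mk sd a, Quotient.mk sd b) = e ∧ v = d s(a, b)}

/-- `drop(X) = TMST - TMST_{/X}` for the terminal metric `d`. -/
noncomputable def dropCost {R : Type*} (d : Sym2 R → ℝ) (X : Set R) : ℝ :=
  mstCost d - mstCost (quotCost d (contractSetoid X))

/-!
At every time `t`, the partition of `M/Y` is the image of a partition coarser than that of `M`,
so it has at most as many parts meeting `X`; integrating over `t` gives (i).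

For (ii), the cost of a minimum spanning tree equals `∫_0^∞ (c_t - 1) dt`, where `c_t` is the
number of classes of the partition generated by the edges of cost `< t`: every tree edge of cost
`≥ t` merges at most two classes, and a tree built by repeatedly contracting a lightest edge
(Kruskal's algorithm) attains the bound. Contracting `X` merges the classes meeting `X`, so
`drop(X)` is the same integral with `c_t` replaced by the number of classes meeting `X`. The
threshold partitions of `G/Y` are those of `G` with `Y` merged, so (ii) follows as (i) does.
-/

open Set MeasureTheory Filter

open scoped Finset

theorem card_quotient_contractSetoid_add_ncard {α : Type*} [Finite α] {Z : Set α}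
    (hZ : Z.Nonempty) :
    Nat.card (Quotient (contractSetoid Z)) + Z.ncard = Nat.card α + 1 := by
  obtain ⟨z, hz⟩ := hZ
  set g := Quotient.mk (contractSetoid Z)
  have hsplit : (univ : Set (Quotient (contractSetoid Z))) = g '' Zᶜ ∪ {g z} := by
    refine (eq_univ_of_forall fun q => ?_).symm
    obtain ⟨a, rfl⟩ := Quotient.mk_surjective q
    by_cases ha : a ∈ Z
    · exact Or.inr (Quotient.sound (Or.inr ⟨ha, hz⟩))
    · exact Or.inl ⟨a, ha, rfl⟩
  have hdisj : Disjoint (g '' Zᶜ) {g z} := by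
    rw [disjoint_singleton_right]
    rintro ⟨a, ha, h⟩
    rcases Quotient.exact h with rfl | ⟨ha', -⟩
    exacts [ha hz, ha ha']
  have hinj : InjOn g Zᶜ := fun a ha b _ h => by
    rcases Quotient.exact h with h | ⟨ha', -⟩
    exacts [h, absurd ha' ha]
  rw [← ncard_univ, hsplit, ncard_union_eq hdisj, hinj.ncard_image, ncard_singleton,
    ← ncard_add_ncard_compl Z]
  ring

namespace Setoid

variable {α β : Type*}

noncomputable def classCount (s : Setoid α) (X : Set α) : ℕ :=
  (Quotient.mk s '' X).ncard

theorem classCount_image_eq_comap (s : Setoid β) (f : α → β) (X : Set α) :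
    s.classCount (f '' X) = (s.comap f).classCount X := by
  let g : Quotient (s.comap f) → Quotient s := Quotient.map' f fun _ _ h => h
  have hg : Function.Injective g := by
    rintro ⟨a⟩ ⟨b⟩ h
    have h' : s (f a) (f b) := Quotient.exact (s := s) h
    exact Quotient.sound h'
  rw [classCount, classCount, ← ncard_image_of_injective _ hg, ← image_comp, ← image_comp]
  rfl

theorem classCount_comap_univ {f : α → β} (hf : Function.Surjective f) (s : Setoid β) :
    (s.comap f).classCount univ = s.classCount univ := by
  rw [← classCount_image_eq_comap, image_univ_of_surjective hf]

theorem classCount_univ (s : Setoid α) : s.classCount univ = Nat.card (Quotient s) := by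
  rw [classCount, image_univ_of_surjective Quotient.mk_surjective, ncard_univ]

theorem classCount_top {X : Set α} (hX : X.Nonempty) : (⊤ : Setoid α).classCount X = 1 := by
  rw [classCount, ncard_eq_one]
  obtain ⟨x, hx⟩ := hX
  exact ⟨Quotient.mk _ x, subset_antisymm (image_subset_iff.2 fun y _ => Quotient.sound trivial)
    (singleton_subset_iff.2 ⟨x, hx, rfl⟩)⟩

theorem classCount_pair (s : Setoid α) (a b : α) [Decidable (s a b)] :
    s.classCount {a, b} = if s a b then 1 else 2 := by
  rw [classCount, image_pair]
  split_ifs with h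
  · rw [Quotient.sound h, pair_eq_singleton, ncard_singleton]
  · exact ncard_pair fun h' => h (Quotient.exact h')

theorem classCount_anti [Finite α] {s s' : Setoid α} (h : s ≤ s') (X : Set α) :
    s'.classCount X ≤ s.classCount X := by
  have : Quotient.mk s' '' X = Setoid.map_of_le h '' (Quotient.mk s '' X) := by
    rw [image_image]; rfl
  rw [classCount, classCount, this]
  exact ncard_image_le (toFinite _)

theorem sup_contractSetoid_eq_comap (s : Setoid α) (X : Set α) :
    s ⊔ contractSetoid X = (contractSetoid (Quotient.mk s '' X)).comap (Quotient.mk s) := by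
  refine le_antisymm (sup_le (fun a b h => Or.inl (Quotient.sound h)) ?_) ?_
  · rintro a b (rfl | ⟨ha, hb⟩)
    · exact Or.inl rfl
    · exact Or.inr ⟨mem_image_of_mem _ ha, mem_image_of_mem _ hb⟩
  · rintro a b (h | ⟨⟨x, hx, hxa⟩, ⟨y, hy, hyb⟩⟩)
    · exact le_sup_left (a := s) (Quotient.exact h)
    · have hax : (s ⊔ contractSetoid X) a x := le_sup_left (a := s) (Quotient.exact hxa.symm)
      have hxy : (s ⊔ contractSetoid X) x y := le_sup_right (a := s) (Or.inr ⟨hx, hy⟩)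
      have hyb : (s ⊔ contractSetoid X) y b := le_sup_left (a := s) (Quotient.exact hyb)
      exact Setoid.trans' _ (Setoid.trans' _ hax hxy) hyb

theorem classCount_sup_contractSetoid [Finite α] (s : Setoid α) {X : Set α} (hX : X.Nonempty) :
    (s ⊔ contractSetoid X).classCount univ + s.classCount X = s.classCount univ + 1 := by
  rw [sup_contractSetoid_eq_comap, classCount_comap_univ Quotient.mk_surjective, classCount_univ,
    classCount_univ, classCount]
  exact card_quotient_contractSetoid_add_ncard (hX.image _)

theorem classCount_univ_le_sup_pair_add_one [Finite α] (s : Setoid α) (a b : α) :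
    s.classCount univ ≤ (s ⊔ contractSetoid {a, b}).classCount univ + 1 := by
  classical
  have hsup := s.classCount_sup_contractSetoid (X := {a, b}) (insert_nonempty _ _)
  have hpair := s.classCount_pair a b
  split_ifs at hpair <;> omega

theorem classCount_univ_le_sup_add_card [Finite α] (s : Setoid α) (F : Finset (Sym2 α)) :
    s.classCount univ ≤
      (s ⊔ F.sup fun e => contractSetoid {x | x ∈ e}).classCount univ + #F := by
  classical
  induction F using Finset.induction_on generalizing s with
  | empty => simp
  | insert e F he ih =>
    induction e with | _ a b => ?_
    have hpair : {x | x ∈ s(a, b)} = ({a, b} : Set α) := by ext; simp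
    rw [Finset.sup_insert, Finset.card_insert_of_notMem he, hpair, ← sup_assoc]
    have := ih (s ⊔ contractSetoid {a, b})
    have := s.classCount_univ_le_sup_pair_add_one a b
    omega

end Setoid

section EdgeSetoid

variable {α β : Type*}

def edgeSetoid (E : Set (Sym2 α)) : Setoid α :=
  Relation.EqvGen.setoid fun a b => s(a, b) ∈ E

theorem edgeSetoid_rel_of_mem {E : Set (Sym2 α)} {a b : α} (h : s(a, b) ∈ E) :
    edgeSetoid E a b :=
  Relation.EqvGen.rel _ _ h

theorem reachable_fromEdgeSet_iff {E : Set (Sym2 α)} {a b : α} :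
    (SimpleGraph.fromEdgeSet E).Reachable a b ↔ edgeSetoid E a b := by
  constructor
  · rintro ⟨p⟩
    induction p with
    | nil => exact (edgeSetoid E).refl' _
    | cons h _ ih => exact (edgeSetoid E).trans' (edgeSetoid_rel_of_mem h.1) ih
  · intro h
    induction h with
    | rel a b h =>
      by_cases hab : a = b
      · exact hab ▸ SimpleGraph.Reachable.refl a
      · exact SimpleGraph.Adj.reachable ⟨h, hab⟩
    | refl => rfl
    | symm _ _ _ ih => exact ih.symm
    | trans _ _ _ _ _ ih₁ ih₂ => exact ih₁.trans ih₂

theorem connected_fromEdgeSet_iff [Nonempty α] {E : Set (Sym2 α)} :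
    (SimpleGraph.fromEdgeSet E).Connected ↔ edgeSetoid E = ⊤ := by
  simp only [SimpleGraph.connected_iff, Setoid.eq_top_iff, SimpleGraph.Preconnected,
    reachable_fromEdgeSet_iff, and_iff_left ‹Nonempty α›]

theorem comap_edgeSetoid_le {f : α → β} {E : Set (Sym2 β)} {s : Setoid α}
    (hker : Setoid.ker f ≤ s) (hlift : ∀ e ∈ E, ∃ a b, s a b ∧ s(f a, f b) = e) :
    (edgeSetoid E).comap f ≤ s := by
  have hle : edgeSetoid E ≤ s.map f := Setoid.eqvGen_le fun q q' hq => by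
    obtain ⟨a, b, hab, he⟩ := hlift _ hq
    rcases Sym2.eq_iff.1 he with ⟨rfl, rfl⟩ | ⟨rfl, rfl⟩
    · exact Relation.EqvGen.rel _ _ ⟨a, b, hab, rfl, rfl⟩
    · exact Relation.EqvGen.symm _ _ (Relation.EqvGen.rel _ _ ⟨a, b, hab, rfl, rfl⟩)
  exact fun a b h => (Setoid.comap_map_of_ker_le f s hker).le (hle h)

end EdgeSetoid

section QuotCost

variable {α : Type*} [Finite α] (u : Sym2 α → ℝ) (σ : Setoid α)

theorem exists_quotCost_eq (e : Sym2 (Quotient σ)) :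
    ∃ a b, s(Quotient.mk σ a, Quotient.mk σ b) = e ∧ quotCost u σ e = u s(a, b) := by
  have hne :
      {v | ∃ a b, s(Quotient.mk σ a, Quotient.mk σ b) = e ∧ v = u s(a, b)}.Nonempty := by
    induction e with | _ q q' => ?_
    obtain ⟨a, rfl⟩ := Quotient.mk_surjective q
    obtain ⟨b, rfl⟩ := Quotient.mk_surjective q'
    exact ⟨_, a, b, rfl, rfl⟩
  have hfin : {v | ∃ a b, s(Quotient.mk σ a, Quotient.mk σ b) = e ∧ v = u s(a, b)}.Finite :=
    (finite_range u).subset (by rintro _ ⟨a, b, -, rfl⟩; exact mem_range_self _)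
  exact hne.csInf_mem hfin

theorem quotCost_le (a b : α) :
    quotCost u σ s(Quotient.mk σ a, Quotient.mk σ b) ≤ u s(a, b) :=
  csInf_le ((finite_range u).bddBelow.mono (by rintro _ ⟨a, b, -, rfl⟩; exact mem_range_self _))
    ⟨a, b, rfl, rfl⟩

omit u in
theorem quotCost_nonneg {u : Sym2 α → ℝ} (hu : ∀ e, 0 ≤ u e) (e : Sym2 (Quotient σ)) :
    0 ≤ quotCost u σ e := by
  obtain ⟨a, b, -, h⟩ := exists_quotCost_eq u σ e
  exact h ▸ hu _

end QuotCost

section MergeFamily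

variable {α β : Type*}

structure IsMergeFamily (s : ℝ → Setoid α) : Prop where
  monotoneOn : MonotoneOn s (Ici 0)
  eventually_eq_top : ∀ᶠ t in atTop, s t = ⊤

theorem IsMergeFamily.sup_const {s : ℝ → Setoid α} (hs : IsMergeFamily s) (σ : Setoid α) :
    IsMergeFamily fun t => s t ⊔ σ where
  monotoneOn _ ha _ hb hab := sup_le_sup_right (hs.monotoneOn ha hb hab) σ
  eventually_eq_top := hs.eventually_eq_top.mono fun t ht => by rw [ht, top_sup_eq]

/-- `MergePlan.localValue M X` is `partitionValue M.rel X` by definition. -/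
noncomputable def partitionValue (s : ℝ → Setoid α) (X : Set α) : ℝ :=
  ∫ t in Ioi 0, ((s t).classCount X : ℝ) - 1

theorem IsMergeFamily.integrableOn [Finite α] {s : ℝ → Setoid α} (hs : IsMergeFamily s)
    {X : Set α} (hX : X.Nonempty) :
    IntegrableOn (fun t => ((s t).classCount X : ℝ) - 1) (Ioi 0) := by
  obtain ⟨T, hT⟩ := eventually_atTop.1 hs.eventually_eq_top
  rw [← Ioc_union_Ioi_eq_Ioi (le_max_right T 0)]
  refine IntegrableOn.union ?_ ?_
  · refine (AntitoneOn.integrableOn_isCompact isCompact_Icc ?_).mono_set Ioc_subset_Icc_self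
    intro a ha b hb hab
    exact sub_le_sub_right
      (Nat.cast_le.2 (Setoid.classCount_anti (hs.monotoneOn ha.1 hb.1 hab) X)) 1
  · refine integrableOn_zero.congr_fun (fun t ht => ?_) measurableSet_Ioi
    rw [hT t ((le_max_left T 0).trans ht.le), Setoid.classCount_top hX, Nat.cast_one, sub_self]

theorem partitionValue_image_le [Finite α] [Finite β] {s : ℝ → Setoid α}
    {s' : ℝ → Setoid β} (hs : IsMergeFamily s) (hs' : IsMergeFamily s') (f : α → β)
    (hle : ∀ t, 0 < t → s t ≤ (s' t).comap f) {X : Set α} (hX : X.Nonempty) :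
    partitionValue s' (f '' X) ≤ partitionValue s X := by
  refine setIntegral_mono_on (hs'.integrableOn (hX.image f)) (hs.integrableOn hX)
    measurableSet_Ioi fun t ht => ?_
  rw [Setoid.classCount_image_eq_comap]
  exact sub_le_sub_right (Nat.cast_le.2 (Setoid.classCount_anti (hle t ht) X)) 1

end MergeFamily

theorem MergePlan.isMergeFamily_rel {α : Type*} [Finite α] (M : MergePlan α) :
    IsMergeFamily M.rel where
  monotoneOn t ht t' _ htt' a b hab := by
    by_cases hne : a = b
    · exact hne ▸ (M.rel t').refl' a
    by_contra h
    obtain ⟨-, hle⟩ := (M.rel_iff t' a b hne).1 h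
    exact (M.rel_iff t a b hne).2 ⟨ht, htt'.trans hle⟩ hab
  eventually_eq_top := by
    obtain ⟨T, hT⟩ := (finite_range fun p : α × α => M.mergeTime p.1 p.2).bddAbove
    filter_upwards [eventually_gt_atTop T] with t ht
    refine Setoid.eq_top_iff.2 fun a b => ?_
    by_cases hab : a = b
    · exact hab ▸ (M.rel t).refl' a
    · by_contra h
      exact ((M.rel_iff t a b hab).1 h).2.not_gt ((hT ⟨(a, b), rfl⟩).trans_lt ht)

section Threshold

variable {α : Type*}

def thresholdSetoid (u : Sym2 α → ℝ) (t : ℝ) : Setoid α :=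
  edgeSetoid {e | u e < t}

theorem isMergeFamily_thresholdSetoid [Finite α] (u : Sym2 α → ℝ) :
    IsMergeFamily (thresholdSetoid u) where
  monotoneOn _ _ _ _ hst := Setoid.eqvGen_mono fun _ _ h => lt_of_lt_of_le h hst
  eventually_eq_top := by
    obtain ⟨T, hT⟩ := (finite_range u).bddAbove
    filter_upwards [eventually_gt_atTop T] with t ht
    exact Setoid.eq_top_iff.2 fun a b =>
      edgeSetoid_rel_of_mem ((hT (mem_range_self s(a, b))).trans_lt ht)

theorem thresholdSetoid_eq_bot {u : Sym2 α → ℝ} {t : ℝ}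
    (h : ∀ a b, a ≠ b → t ≤ u s(a, b)) : thresholdSetoid u t = ⊥ := by
  refine le_bot_iff.1 (Setoid.eqvGen_le fun a b (hab : u s(a, b) < t) => ?_)
  by_contra hne
  exact (h a b hne).not_gt hab

theorem comap_thresholdSetoid_quotCost [Finite α] (u : Sym2 α → ℝ) (σ : Setoid α)
    (t : ℝ) :
    (thresholdSetoid (quotCost u σ) t).comap (Quotient.mk σ) = thresholdSetoid u t ⊔ σ := by
  apply le_antisymm
  · refine comap_edgeSetoid_le (fun a b h => le_sup_right (a := thresholdSetoid u t)
      (Quotient.exact h)) fun e he => ?_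
    obtain ⟨a, b, rfl, hab⟩ := exists_quotCost_eq u σ e
    exact ⟨a, b, le_sup_left (a := thresholdSetoid u t)
      (edgeSetoid_rel_of_mem (show u s(a, b) < t from hab ▸ he)), rfl⟩
  · refine sup_le (Setoid.eqvGen_le fun a b h => ?_) fun a b h => ?_
    · exact edgeSetoid_rel_of_mem ((quotCost_le u σ a b).trans_lt h)
    · rw [Setoid.comap_rel, Quotient.sound h]

end Threshold

theorem card_filter_insert_image {β γ : Type*} [DecidableEq β] {ψ : γ → β}
    (hψ : Function.Injective ψ) {T : Finset γ} {p : β} (hp : p ∉ T.image ψ) {u : β → ℝ}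
    {u' : γ → ℝ} (hu : ∀ e, u (ψ e) = u' e) (t : ℝ) :
    #{e ∈ insert p (T.image ψ) | t ≤ u e} =
      #{e ∈ T | t ≤ u' e} + if t ≤ u p then 1 else 0 := by
  have himage : {e ∈ T.image ψ | t ≤ u e} = {e ∈ T | t ≤ u' e}.image ψ := by
    simp only [Finset.filter_image, hu]
  rw [Finset.filter_insert, himage]
  split_ifs
  · rw [Finset.card_insert_of_notMem fun h =>
      hp (Finset.image_subset_image (Finset.filter_subset _ _) h),
      Finset.card_image_of_injective _ hψ]
  · rw [Finset.card_image_of_injective _ hψ, add_zero]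

section SpanningTree

variable {α : Type*}

def IsSpanningTreeEdges (T : Finset (Sym2 α)) : Prop :=
  (∀ e ∈ T, ¬ e.IsDiag) ∧ (SimpleGraph.fromEdgeSet (T : Set (Sym2 α))).Connected ∧
    T.card + 1 = Nat.card α

theorem classCount_thresholdSetoid_le [Finite α] [Nonempty α] (u : Sym2 α → ℝ) (t : ℝ)
    {T : Finset (Sym2 α)} (hT : (SimpleGraph.fromEdgeSet (T : Set (Sym2 α))).Connected) :
    (thresholdSetoid u t).classCount univ ≤ #{e ∈ T | t ≤ u e} + 1 := by
  classical
  set F := {e ∈ T | t ≤ u e}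
  have htop : thresholdSetoid u t ⊔ F.sup (fun e => contractSetoid {x | x ∈ e}) = ⊤ := by
    refine top_le_iff.1 ((connected_fromEdgeSet_iff.1 hT).ge.trans
      (Setoid.eqvGen_le fun a b (hab : s(a, b) ∈ T) => ?_))
    by_cases h : u s(a, b) < t
    · exact le_sup_left (a := thresholdSetoid u t) (edgeSetoid_rel_of_mem h)
    · have hle :
          contractSetoid {x | x ∈ s(a, b)} ≤ F.sup fun e => contractSetoid {x | x ∈ e} :=
        Finset.le_sup (f := fun e => contractSetoid {x | x ∈ e})
          (Finset.mem_filter.2 ⟨hab, not_lt.1 h⟩)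
      exact le_sup_right (a := thresholdSetoid u t) (hle (Or.inr ⟨by simp, by simp⟩))
  have := (thresholdSetoid u t).classCount_univ_le_sup_add_card F
  rwa [htop, Setoid.classCount_top Set.univ_nonempty, add_comm] at this

theorem mk_notMem_image_of_map_eq [DecidableEq α] {x y : α}
    {T' : Finset (Sym2 (Quotient (contractSetoid {x, y})))} (hT' : ∀ e ∈ T', ¬ e.IsDiag)
    {ψ : Sym2 (Quotient (contractSetoid {x, y})) → Sym2 α}
    (hψ : ∀ e, (ψ e).map (Quotient.mk _) = e) :
    s(x, y) ∉ T'.image ψ := by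
  intro h
  obtain ⟨e, he, hψe⟩ := Finset.mem_image.1 h
  refine hT' e he ?_
  rw [← hψ e, hψe, Sym2.map_mk, Sym2.mk_isDiag_iff]
  exact Quotient.sound (Or.inr ⟨by simp, by simp⟩)

theorem connected_fromEdgeSet_insert_image [DecidableEq α] {x y : α}
    {T' : Finset (Sym2 (Quotient (contractSetoid {x, y})))}
    (hT' : (SimpleGraph.fromEdgeSet (T' : Set (Sym2 (Quotient (contractSetoid {x, y}))))).Connected)
    {ψ : Sym2 (Quotient (contractSetoid {x, y})) → Sym2 α}
    (hψ : ∀ e, (ψ e).map (Quotient.mk _) = e) :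
    (SimpleGraph.fromEdgeSet (↑(insert s(x, y) (T'.image ψ)) : Set (Sym2 α))).Connected := by
  set E : Set (Sym2 α) := ↑(insert s(x, y) (T'.image ψ))
  have hx : ∀ c ∈ ({x, y} : Set α), edgeSetoid E c x := by
    rintro c (rfl | rfl)
    exacts [Setoid.refl' _ _, Setoid.symm' _ (edgeSetoid_rel_of_mem (Finset.mem_insert_self _ _))]
  have hker : Setoid.ker (Quotient.mk (contractSetoid {x, y})) ≤ edgeSetoid E := by
    intro a b h
    rcases Quotient.exact h with rfl | ⟨ha, hb⟩
    exacts [Setoid.refl' _ _, Setoid.trans' _ (hx a ha) (Setoid.symm' _ (hx b hb))]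
  have hlift (e) (he : e ∈ (T' : Set (Sym2 (Quotient (contractSetoid {x, y}))))) :
      ∃ a b, edgeSetoid E a b ∧ s(Quotient.mk _ a, Quotient.mk _ b) = e := by
    have hmem : ψ e ∈ E := Finset.mem_insert_of_mem (Finset.mem_image_of_mem ψ he)
    have hmap := hψ e
    generalize ψ e = f at hmem hmap
    induction f with
    | _ a b => exact ⟨a, b, edgeSetoid_rel_of_mem hmem, by rw [← hmap, Sym2.map_mk]⟩
  have : Nonempty (Quotient (contractSetoid {x, y})) := hT'.nonempty
  have : Nonempty α := ⟨x⟩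
  refine connected_fromEdgeSet_iff.2 (Setoid.eq_top_iff.2 fun a b => ?_)
  refine comap_edgeSetoid_le hker hlift ?_
  rw [Setoid.comap_rel, connected_fromEdgeSet_iff.1 hT']
  trivial

theorem isSpanningTreeEdges_insert_image [Finite α] [DecidableEq α] {x y : α} (hxy : x ≠ y)
    {T' : Finset (Sym2 (Quotient (contractSetoid {x, y})))} (hT' : IsSpanningTreeEdges T')
    {ψ : Sym2 (Quotient (contractSetoid {x, y})) → Sym2 α}
    (hψ : ∀ e, (ψ e).map (Quotient.mk _) = e) :
    IsSpanningTreeEdges (insert s(x, y) (T'.image ψ)) := by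
  refine ⟨fun e he hdiag => ?_, connected_fromEdgeSet_insert_image hT'.2.1 hψ, ?_⟩
  · rcases Finset.mem_insert.1 he with rfl | he
    · exact hxy (Sym2.mk_isDiag_iff.1 hdiag)
    · obtain ⟨e', he', rfl⟩ := Finset.mem_image.1 he
      exact hT'.1 e' he' (hψ e' ▸ hdiag.map)
  · have hcard := card_quotient_contractSetoid_add_ncard (insert_nonempty x {y})
    rw [ncard_pair hxy] at hcard
    rw [Finset.card_insert_of_notMem (mk_notMem_image_of_map_eq hT'.1 hψ),
      Finset.card_image_of_injective _ (Function.LeftInverse.injective hψ)]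
    have := hT'.2.2
    omega

theorem classCount_thresholdSetoid_sup_lightest [Finite α] {u : Sym2 α → ℝ} {x y : α}
    (hxy : x ≠ y) (hmin : ∀ a b, a ≠ b → u s(x, y) ≤ u s(a, b)) (t : ℝ) :
    (thresholdSetoid u t ⊔ contractSetoid {x, y}).classCount univ +
        (if t ≤ u s(x, y) then 1 else 0) = (thresholdSetoid u t).classCount univ := by
  classical
  have hsup := (thresholdSetoid u t).classCount_sup_contractSetoid (insert_nonempty x {y})
  have hpair := (thresholdSetoid u t).classCount_pair x y
  have hrel : thresholdSetoid u t x y ↔ u s(x, y) < t := by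
    refine ⟨fun h => not_le.1 fun hle => hxy ?_,
      fun h => edgeSetoid_rel_of_mem (E := {e | u e < t}) h⟩
    rwa [thresholdSetoid_eq_bot fun a b hab => hle.trans (hmin a b hab)] at h
  by_cases ht : t ≤ u s(x, y)
  · rw [if_neg (hrel.not.2 (not_lt.2 ht))] at hpair
    rw [if_pos ht]
    omega
  · rw [if_pos (hrel.2 (not_le.1 ht))] at hpair
    rw [if_neg ht]
    omega

theorem exists_kruskal_tree [Finite α] [Nonempty α] (u : Sym2 α → ℝ) :
    ∃ T : Finset (Sym2 α), IsSpanningTreeEdges T ∧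
      ∀ t, #{e ∈ T | t ≤ u e} + 1 = (thresholdSetoid u t).classCount univ := by
  classical
  obtain ⟨n, hn⟩ : ∃ n, Nat.card α = n + 1 := Nat.exists_eq_add_one.2 Nat.card_pos
  induction n generalizing α with
  | zero =>
    have : Subsingleton α := (Nat.card_eq_one_iff_unique.1 hn).1
    have htop (s : Setoid α) : s = ⊤ :=
      Setoid.eq_top_iff.2 fun a b => Subsingleton.elim a b ▸ s.refl' a
    refine ⟨∅, ⟨by simp, connected_fromEdgeSet_iff.2 (htop _), by simp⟩, fun t => ?_⟩
    rw [htop (thresholdSetoid u t), Setoid.classCount_top Set.univ_nonempty]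
    simp
  | succ n ih =>
    have : Nontrivial α := Finite.one_lt_card_iff_nontrivial.1 (by omega)
    have : Nonempty {p : α × α // p.1 ≠ p.2} :=
      let ⟨x, y, hxy⟩ := exists_pair_ne α; ⟨⟨(x, y), hxy⟩⟩
    obtain ⟨⟨⟨x, y⟩, hxy⟩, hmin⟩ :=
      Finite.exists_min fun p : {p : α × α // p.1 ≠ p.2} => u s(p.1.1, p.1.2)
    dsimp only at hxy hmin
    have hcard : Nat.card (Quotient (contractSetoid {x, y})) = n + 1 := by
      have := card_quotient_contractSetoid_add_ncard (insert_nonempty x {y})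
      rw [ncard_pair hxy] at this
      omega
    have : Nonempty (Quotient (contractSetoid {x, y})) := ⟨Quotient.mk _ x⟩
    obtain ⟨T', hT', hT'u⟩ := ih (quotCost u (contractSetoid {x, y})) hcard
    choose a b hab hcost using exists_quotCost_eq u (contractSetoid {x, y})
    set ψ := fun e => s(a e, b e)
    have hψ (e) : (ψ e).map (Quotient.mk (contractSetoid {x, y})) = e := by rw [Sym2.map_mk, hab]
    refine ⟨_, isSpanningTreeEdges_insert_image hxy hT' hψ, fun t => ?_⟩
    rw [card_filter_insert_image (Function.LeftInverse.injective hψ)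
      (mk_notMem_image_of_map_eq hT'.1 hψ) (fun e => (hcost e).symm), add_right_comm, hT'u t,
      ← Setoid.classCount_comap_univ Quotient.mk_surjective,
      comap_thresholdSetoid_quotCost u (contractSetoid {x, y})]
    exact classCount_thresholdSetoid_sup_lightest hxy
      (fun a b hab => hmin ⟨(a, b), hab⟩) t

end SpanningTree

section LayerCake

theorem integrableOn_indicator_Iic_one (c : ℝ) :
    IntegrableOn ((Iic c).indicator (1 : ℝ → ℝ)) (Ioi 0) := by
  refine (integrable_indicator_iff measurableSet_Iic).2 (integrableOn_const ?_)
  rw [Measure.restrict_apply measurableSet_Iic, Iic_inter_Ioi]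
  exact measure_Ioc_lt_top.ne

theorem integral_indicator_Iic_one {c : ℝ} (hc : 0 ≤ c) :
    ∫ t in Ioi 0, (Iic c).indicator (1 : ℝ → ℝ) t = c := by
  rw [integral_indicator_one measurableSet_Iic, measureReal_restrict_apply measurableSet_Iic,
    Iic_inter_Ioi, Real.volume_real_Ioc_of_le hc, sub_zero]

variable {ι : Type*} (T : Finset ι)

theorem natCast_card_filter_le_eq_sum_indicator (u : ι → ℝ) (t : ℝ) :
    (#{i ∈ T | t ≤ u i} : ℝ) = ∑ i ∈ T, (Iic (u i)).indicator 1 t := by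
  simp only [Finset.natCast_card_filter, indicator_apply, mem_Iic, Pi.one_apply]

theorem integrableOn_card_filter_le (u : ι → ℝ) :
    IntegrableOn (fun t => (#{i ∈ T | t ≤ u i} : ℝ)) (Ioi 0) := by
  simp only [natCast_card_filter_le_eq_sum_indicator]
  exact integrable_finsetSum _ fun i _ => integrableOn_indicator_Iic_one (u i)

theorem sum_eq_integral_card_filter_le {u : ι → ℝ} (hu : ∀ i ∈ T, 0 ≤ u i) :
    ∑ i ∈ T, u i = ∫ t in Ioi 0, (#{i ∈ T | t ≤ u i} : ℝ) := by
  simp only [natCast_card_filter_le_eq_sum_indicator]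
  rw [integral_finsetSum _ fun i _ => integrableOn_indicator_Iic_one (u i)]
  exact Finset.sum_congr rfl fun i hi => (integral_indicator_Iic_one (hu i hi)).symm

end LayerCake

section MinimumSpanningTree

variable {α : Type*} [Finite α]

theorem mstCost_eq_partitionValue [Nonempty α] {u : Sym2 α → ℝ} (hu : ∀ e, 0 ≤ u e) :
    mstCost u = partitionValue (thresholdSetoid u) univ := by
  obtain ⟨K, hK, hKu⟩ := exists_kruskal_tree u
  have hK_sum : ∑ e ∈ K, u e = partitionValue (thresholdSetoid u) univ := by
    rw [sum_eq_integral_card_filter_le K fun e _ => hu e, partitionValue]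
    refine setIntegral_congr_fun measurableSet_Ioi fun t _ => ?_
    rw [← hKu t]
    push_cast
    ring
  have hlower (T : Finset (Sym2 α))
      (hT : (SimpleGraph.fromEdgeSet (T : Set (Sym2 α))).Connected) :
      partitionValue (thresholdSetoid u) univ ≤ ∑ e ∈ T, u e := by
    rw [sum_eq_integral_card_filter_le T fun e _ => hu e]
    refine setIntegral_mono_on ((isMergeFamily_thresholdSetoid u).integrableOn univ_nonempty)
      (integrableOn_card_filter_le T u) measurableSet_Ioi fun t _ => ?_
    have := classCount_thresholdSetoid_le u t hT
    rw [sub_le_iff_le_add]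
    exact_mod_cast this
  refine le_antisymm ?_ ?_
  · rw [← hK_sum]
    refine csInf_le ⟨partitionValue (thresholdSetoid u) univ, ?_⟩
      ⟨K, hK.1, hK.2.1, hK.2.2, rfl⟩
    rintro _ ⟨T, -, hT, -, rfl⟩
    exact hlower T hT
  · refine le_csInf ⟨_, K, hK.1, hK.2.1, hK.2.2, rfl⟩ ?_
    rintro _ ⟨T, -, hT, -, rfl⟩
    exact hlower T hT

theorem mstCost_quotCost_eq_partitionValue [Nonempty α] {u : Sym2 α → ℝ}
    (hu : ∀ e, 0 ≤ u e) (σ : Setoid α) :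
    mstCost (quotCost u σ) = partitionValue (fun t => thresholdSetoid u t ⊔ σ) univ := by
  have : Nonempty (Quotient σ) := ⟨Quotient.mk σ (Classical.arbitrary α)⟩
  rw [mstCost_eq_partitionValue (quotCost_nonneg σ hu), partitionValue, partitionValue]
  refine setIntegral_congr_fun measurableSet_Ioi fun t _ => ?_
  rw [← comap_thresholdSetoid_quotCost, Setoid.classCount_comap_univ Quotient.mk_surjective]

theorem mstCost_of_isEmpty {β : Type*} [IsEmpty β] (u : Sym2 β → ℝ) : mstCost u = 0 := by
  rw [mstCost, Nat.card_of_isEmpty]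
  convert Real.sInf_empty
  exact eq_empty_of_forall_notMem fun _ ⟨_, _, _, h, _⟩ => Nat.succ_ne_zero _ h

theorem dropCost_eq_partitionValue {u : Sym2 α → ℝ} (hu : ∀ e, 0 ≤ u e) {X : Set α}
    (hX : X.Nonempty) : dropCost u X = partitionValue (thresholdSetoid u) X := by
  have : Nonempty α := hX.to_subtype.map Subtype.val
  rw [dropCost, mstCost_eq_partitionValue hu, mstCost_quotCost_eq_partitionValue hu,
    partitionValue, partitionValue, ← integral_sub
      ((isMergeFamily_thresholdSetoid u).integrableOn univ_nonempty)
      (((isMergeFamily_thresholdSetoid u).sup_const _).integrableOn univ_nonempty)]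
  refine setIntegral_congr_fun measurableSet_Ioi fun t _ => ?_
  have := congrArg (Nat.cast : ℕ → ℝ) ((thresholdSetoid u t).classCount_sup_contractSetoid hX)
  push_cast at this
  linarith

theorem dropCost_empty {u : Sym2 α → ℝ} (hu : ∀ e, 0 ≤ u e) : dropCost u ∅ = 0 := by
  rcases isEmpty_or_nonempty α with hα | hα
  · rw [dropCost, mstCost_of_isEmpty, mstCost_of_isEmpty, sub_self]
  · have : contractSetoid (∅ : Set α) = ⊥ := Setoid.ext fun a b => by
      simp only [Setoid.bot_def]; exact or_iff_left fun h => h.1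
    rw [dropCost, mstCost_quotCost_eq_partitionValue hu, this, mstCost_eq_partitionValue hu]
    simp only [sup_bot_eq, sub_self]

end MinimumSpanningTree

/-- (i) For any merge plan `M` on `R`, any contraction set `Y ⊆ R`,
and the contracted merge plan `M/Y` on `R/Y` (whose partition at each time arises from
that of `M` by combining all parts intersecting `Y`), the local value of any nonempty
`X ⊆ R` can only decrease: `value(M/Y, X) ≤ value(M, X)`.
(ii) Consequently, for terminal metrics, `drop_{G/Y}(X) ≤ drop_G(X)`. -/
theorem localValue_contract_le_and_drop_contract_le {R : Type*} [Fintype R] :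
    (∀ (M : MergePlan R) (Y : Set R)
      (M' : MergePlan (Quotient (contractSetoid Y))),
      (∀ t : ℝ, 0 ≤ t → ∀ a b : R,
        ((M'.rel t).r (Quotient.mk (contractSetoid Y) a) (Quotient.mk (contractSetoid Y) b) ↔
          ((M.rel t).r a b ∨
            ((∃ y ∈ Y, (M.rel t).r a y) ∧ (∃ y ∈ Y, (M.rel t).r y b))))) →
      ∀ X : Set R, X.Nonempty →
        M'.localValue (Quotient.mk (contractSetoid Y) '' X) ≤ M.localValue X) ∧
    (∀ (d : Sym2 R → ℝ), (∀ e, 0 ≤ d e) → ∀ (X Y : Set R),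
      dropCost (quotCost d (contractSetoid Y)) (Quotient.mk (contractSetoid Y) '' X) ≤
        dropCost d X) := by
  refine ⟨fun M Y M' hM' X hX => ?_, fun d hd X Y => ?_⟩
  · exact partitionValue_image_le M.isMergeFamily_rel M'.isMergeFamily_rel _
      (fun t ht a b hab => (hM' t ht.le a b).2 (Or.inl hab)) hX
  · rcases X.eq_empty_or_nonempty with rfl | hX
    · rw [image_empty, dropCost_empty hd, dropCost_empty (quotCost_nonneg _ hd)]
    · rw [dropCost_eq_partitionValue hd hX,
        dropCost_eq_partitionValue (quotCost_nonneg _ hd) (hX.image _)]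
      refine partitionValue_image_le (isMergeFamily_thresholdSetoid d)
        (isMergeFamily_thresholdSetoid _) _ (fun t _ => ?_) hX
      rw [comap_thresholdSetoid_quotCost d (contractSetoid Y)]
      exact le_sup_left
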